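/- arXiv:1909.05075 — 4 statements merged into one kernel-verified Lean document; each statement's English description precedes it below -/
import Mathlib

section
/- For every horizon m ≥ 0 and every state with 0 ≤ Σ ≤ n, n > 0, the Bernoulli one-armed-bandit value function satisfies W_m(Σ,n,γ,λ) ≥ max(Σ/n − λ, 0)/(1−γ). In particular, W_m(Σ,n,γ,λ) > 0 whenever λ < Σ/n. -/
/-!
Let `p = Σ/n` be the posterior mean and `V p = max (p - λ) 0 / (1 - γ)` the value of pulling the
risky arm forever. The posterior mean is a martingale, `p = p·(Σ+1)/(n+1) + (1-p)·Σ/(n+1)`, and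
`V` is convex, so by Jensen the expected continuation value dominates `V p`. Since `V p` is the
fixed point `V p = (p - λ) + γ V p` when `p > λ`, induction on the horizon gives `V p ≤ W_m`.
-/

/-- Finite-horizon value function of the Bernoulli one-armed bandit:
`W γ m Σ n λ`, with discount `γ`, horizon `m`, state `(Σ, n)` and safe-arm
reward `λ`. -/
noncomputable def W (γ : ℝ) : ℕ → ℝ → ℝ → ℝ → ℝ
  | 0, S, n, lam => max (S / n - lam) 0 / (1 - γ)
  | m + 1, S, n, lam =>
      max (S / n - lam + γ * ((S / n) * W γ m (S + 1) (n + 1) lam +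
        (1 - S / n) * W γ m S (n + 1) lam)) 0

theorem max_sub_zero_convex_comb_le {p : ℝ} (a b c : ℝ) (hp0 : 0 ≤ p) (hp1 : p ≤ 1) :
    max (p * a + (1 - p) * b - c) 0 ≤ p * max (a - c) 0 + (1 - p) * max (b - c) 0 := by
  have ha := le_max_left (a - c) 0
  have hb := le_max_left (b - c) 0
  have ha0 := le_max_right (a - c) 0
  have hb0 := le_max_right (b - c) 0
  apply max_le <;> nlinarith

theorem posterior_mean_martingale {S n : ℝ} (hn : 0 < n) :
    S / n * ((S + 1) / (n + 1)) + (1 - S / n) * (S / (n + 1)) = S / n := by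
  field_simp
  ring

theorem max_zero_div_one_sub_le_max_add_mul {γ x E : ℝ} (hγ0 : 0 ≤ γ) (hγ1 : γ < 1)
    (hE : max x 0 / (1 - γ) ≤ E) : max x 0 / (1 - γ) ≤ max (x + γ * E) 0 := by
  rcases le_or_gt x 0 with hx | hx
  · rw [max_eq_right hx, zero_div]
    exact le_max_right _ _
  · rw [max_eq_left hx.le] at hE ⊢
    have hfix : x + γ * (x / (1 - γ)) = x / (1 - γ) := by
      field_simp [(sub_pos.2 hγ1).ne']
      ring
    calc x / (1 - γ) = x + γ * (x / (1 - γ)) := hfix.symm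
      _ ≤ x + γ * E := by gcongr
      _ ≤ max (x + γ * E) 0 := le_max_left _ _

theorem max_sub_zero_div_one_sub_le_W {γ : ℝ} (lam : ℝ) (hγ0 : 0 ≤ γ) (hγ1 : γ < 1) (m : ℕ) :
    ∀ S n : ℝ, 0 ≤ S → S ≤ n → 0 < n → max (S / n - lam) 0 / (1 - γ) ≤ W γ m S n lam := by
  induction m with
  | zero => intro S n _ _ _; rfl
  | succ m ih =>
    intro S n hS hSn hn
    have hp0 : 0 ≤ S / n := div_nonneg hS hn.le
    have hp1 : S / n ≤ 1 := (div_le_one hn).2 hSn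
    have hsucc := ih (S + 1) (n + 1) (by linarith) (by linarith) (by linarith)
    have hfail := ih S (n + 1) hS (by linarith) (by linarith)
    have hjensen := max_sub_zero_convex_comb_le ((S + 1) / (n + 1)) (S / (n + 1)) lam hp0 hp1
    rw [posterior_mean_martingale hn] at hjensen
    refine max_zero_div_one_sub_le_max_add_mul hγ0 hγ1 ?_
    calc max (S / n - lam) 0 / (1 - γ)
        ≤ (S / n * max ((S + 1) / (n + 1) - lam) 0
            + (1 - S / n) * max (S / (n + 1) - lam) 0) / (1 - γ) := by gcongr
      _ = S / n * (max ((S + 1) / (n + 1) - lam) 0 / (1 - γ))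
            + (1 - S / n) * (max (S / (n + 1) - lam) 0 / (1 - γ)) := by ring
      _ ≤ S / n * W γ m (S + 1) (n + 1) lam + (1 - S / n) * W γ m S (n + 1) lam := by
        gcongr

/-- For every horizon `m` and state with `0 ≤ Σ ≤ n`, `n > 0`, the value
satisfies `W_m(Σ,n,γ,λ) ≥ max(Σ/n − λ, 0)/(1−γ)`; in particular it is
positive whenever `λ < Σ/n`. -/
theorem bmab_value_lower_bound (γ lam S n : ℝ)
    (hγ0 : 0 ≤ γ) (hγ1 : γ < 1) (hS : 0 ≤ S) (hSn : S ≤ n) (hn : 0 < n) :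
    ∀ m : ℕ, max (S / n - lam) 0 / (1 - γ) ≤ W γ m S n lam ∧
      (lam < S / n → 0 < W γ m S n lam) := by
  intro m
  have hbound := max_sub_zero_div_one_sub_le_W lam hγ0 hγ1 m S n hS hSn hn
  refine ⟨hbound, fun hlam => lt_of_lt_of_le ?_ hbound⟩
  have hpos : 0 < S / n - lam := sub_pos.2 hlam
  rw [max_eq_left hpos.le]
  exact div_pos hpos (sub_pos.2 hγ1)
end

section
/- For every horizon m ≥ 0 and every state with 0 ≤ Σ ≤ n, n > 0, the map λ ↦ W_m(Σ,n,γ,λ) is Lipschitz continuous with Lipschitz constant 1/(1−γ): for all λ, λ' ∈ ℝ, |W_m(Σ,n,γ,λ) − W_m(Σ,n,γ,λ')| ≤ |λ − λ'|/(1−γ). -/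
open NNReal

namespace LipschitzWith

variable {α : Type*} [PseudoEMetricSpace α] {K : ℝ≥0}

lemma convex_combination {f g : α → ℝ} {p : ℝ} (hp0 : 0 ≤ p) (hp1 : p ≤ 1)
    (hf : LipschitzWith K f) (hg : LipschitzWith K g) :
    LipschitzWith K fun x => p * f x + (1 - p) * g x := by
  have hsum : ‖p‖₊ + ‖1 - p‖₊ = 1 := by
    ext
    simp [abs_of_nonneg hp0, abs_of_nonneg (sub_nonneg.2 hp1)]
  simpa [← add_mul, hsum] using
    ((lipschitzWith_smul p).comp hf).add ((lipschitzWith_smul (1 - p)).comp hg)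

lemma bellman_update {γ : ℝ} (hK : 1 + ‖γ‖₊ * K ≤ K) {h : ℝ → ℝ} (hh : LipschitzWith K h)
    (c : ℝ) : LipschitzWith K fun x => max (c - x + γ * h x) 0 := by
  refine ((((LipschitzWith.const c).sub LipschitzWith.id).add
    ((lipschitzWith_smul γ).comp hh)).max_const 0).weaken ?_
  simpa using hK

end LipschitzWith

section

variable {γ : ℝ}

lemma one_add_nnnorm_mul_inv_one_sub (hγ0 : 0 ≤ γ) (hγ1 : γ < 1) :
    1 + ‖γ‖₊ * (1 - γ).toNNReal⁻¹ = (1 - γ).toNNReal⁻¹ := by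
  have hγ1' : 1 - γ ≠ 0 := (sub_pos.2 hγ1).ne'
  ext
  simp [abs_of_nonneg hγ0, (sub_pos.2 hγ1).le]
  field_simp
  ring

lemma lipschitzWith_W_zero (hγ1 : γ < 1) (S n : ℝ) :
    LipschitzWith (1 - γ).toNNReal⁻¹ (W γ 0 S n) := by
  have h := (lipschitzWith_smul (1 - γ)⁻¹).comp
    (((LipschitzWith.const (S / n)).sub LipschitzWith.id).max_const 0)
  have hnorm : ‖(1 - γ)⁻¹‖₊ = (1 - γ).toNNReal⁻¹ := by
    ext
    simp [abs_of_pos (sub_pos.2 hγ1), (sub_pos.2 hγ1).le]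
  have hW : W γ 0 S n = fun lam => (1 - γ)⁻¹ * max (S / n - lam) 0 := by
    funext lam
    rw [W, div_eq_inv_mul]
  rw [hW]
  simpa [hnorm, Function.comp_def] using h

theorem lipschitzWith_W (hγ0 : 0 ≤ γ) (hγ1 : γ < 1) (m : ℕ) :
    ∀ {S n : ℝ}, 0 ≤ S → S ≤ n → 0 < n → LipschitzWith (1 - γ).toNNReal⁻¹ (W γ m S n) := by
  induction m with
  | zero => exact fun _ _ _ => lipschitzWith_W_zero hγ1 _ _
  | succ m ih =>
    intro S n hS hSn hn
    have hp0 : 0 ≤ S / n := div_nonneg hS hn.le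
    have hp1 : S / n ≤ 1 := (div_le_one hn).2 hSn
    exact ((ih (by linarith) (by linarith) (by linarith)).convex_combination hp0 hp1
      (ih hS (by linarith) (by linarith))).bellman_update
      (one_add_nnnorm_mul_inv_one_sub hγ0 hγ1).le (S / n)

end

/-- For every horizon `m` and state with `0 ≤ Σ ≤ n`, `n > 0`, the map
`λ ↦ W_m(Σ,n,γ,λ)` is Lipschitz with constant `1/(1−γ)`. -/
theorem bmab_value_lipschitz_in_lambda (γ S n : ℝ)
    (hγ0 : 0 ≤ γ) (hγ1 : γ < 1) (hS : 0 ≤ S) (hSn : S ≤ n) (hn : 0 < n) :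
    ∀ m : ℕ, ∀ lam lam' : ℝ,
      |W γ m S n lam - W γ m S n lam'| ≤ |lam - lam'| / (1 - γ) := by
  intro m lam lam'
  have h := (lipschitzWith_W hγ0 hγ1 m hS hSn hn).dist_le_mul lam lam'
  rwa [Real.dist_eq, Real.dist_eq, NNReal.coe_inv, Real.coe_toNNReal _ (sub_pos.2 hγ1).le,
    inv_mul_eq_div] at h
end

section
/- For every horizon m ≥ 0, the Bernoulli one-armed-bandit value function is nondecreasing in the Bayesian sum of rewards: if 0 ≤ Σ ≤ Σ' ≤ n and n > 0, then W_m(Σ,n,γ,λ) ≤ W_m(Σ',n,γ,λ). -/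
/-! The posterior mean `Σ/n` rises with `Σ`, and the continuation value is the `Σ/n`-mixture of the
values after a success and after a failure. By induction on the horizon both continuation values
are monotone in `Σ`, and the success value dominates the failure value (a success is a shift
`Σ ↦ Σ + 1`), so moving weight towards the success branch can only increase the mixture. -/

theorem mixture_le_mixture {p p' a a' b b' : ℝ} (hp : p ≤ p') (hp0 : 0 ≤ p) (hp'1 : p' ≤ 1)
    (hba : b ≤ a) (ha : a ≤ a') (hb : b ≤ b') :
    p * a + (1 - p) * b ≤ p' * a' + (1 - p') * b' :=
  calc p * a + (1 - p) * b = b + p * (a - b) := by ring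
    _ ≤ b + p' * (a - b) := by gcongr
    _ = p' * a + (1 - p') * b := by ring
    _ ≤ p' * a' + (1 - p') * b' := by gcongr; linarith

theorem W_zero_mono {γ lam S S' n : ℝ} (hγ1 : γ < 1) (hS : S ≤ S') (hn : 0 < n) :
    W γ 0 S n lam ≤ W γ 0 S' n lam := by
  have : 0 < 1 - γ := by linarith
  simp only [W]
  gcongr

theorem W_succ_mono {γ lam : ℝ} {m : ℕ} (hγ0 : 0 ≤ γ)
    (ih : ∀ S S' n : ℝ, 0 ≤ S → S ≤ S' → S' ≤ n → 0 < n → W γ m S n lam ≤ W γ m S' n lam)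
    {S S' n : ℝ} (h0 : 0 ≤ S) (hS : S ≤ S') (hS' : S' ≤ n) (hn : 0 < n) :
    W γ (m + 1) S n lam ≤ W γ (m + 1) S' n lam := by
  have hp : S / n ≤ S' / n := by gcongr
  have hp'1 : S' / n ≤ 1 := (div_le_one hn).2 hS'
  have hmix := mixture_le_mixture hp (div_nonneg h0 hn.le) hp'1
    (ih S (S + 1) (n + 1) h0 (by linarith) (by linarith) (by linarith))
    (ih (S + 1) (S' + 1) (n + 1) (by linarith) (by linarith) (by linarith) (by linarith))
    (ih S S' (n + 1) h0 hS (by linarith) (by linarith))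
  simp only [W]
  gcongr

/-- For every horizon `m`, the value is nondecreasing in the Bayesian sum of
rewards: if `0 ≤ Σ ≤ Σ' ≤ n` and `n > 0` then
`W_m(Σ,n,γ,λ) ≤ W_m(Σ',n,γ,λ)`. -/
theorem bmab_value_monotone_in_sigma (γ lam : ℝ)
    (hγ0 : 0 ≤ γ) (hγ1 : γ < 1) :
    ∀ m : ℕ, ∀ S S' n : ℝ, 0 ≤ S → S ≤ S' → S' ≤ n → 0 < n →
      W γ m S n lam ≤ W γ m S' n lam := by
  intro m
  induction m with
  | zero => exact fun S S' n _ hS _ hn => W_zero_mono hγ1 hS hn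
  | succ m ih => exact fun S S' n h0 hS hS' hn => W_succ_mono hγ0 ih h0 hS hS' hn
end

section
/- Fix a horizon N ≥ 0 and a state with 0 ≤ Σ ≤ n, n > 0, and define the (finite-horizon) Gittins index ν := sInf{λ ∈ ℝ : W_N(Σ,n,γ,λ) = 0}. Then Σ/n ≤ ν ≤ 1, the infimum is attained (W_N(Σ,n,γ,ν) = 0), and W_N(Σ,n,γ,λ) > 0 for every λ < ν. -/
section

variable {γ : ℝ}

lemma W_nonneg (hγ1 : γ < 1) (m : ℕ) (S n lam : ℝ) : 0 ≤ W γ m S n lam := by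
  cases m with
  | zero => exact div_nonneg (le_max_right _ _) (by linarith)
  | succ m => exact le_max_right _ _

lemma continuous_W (m : ℕ) (S n : ℝ) : Continuous (W γ m S n) := by
  induction m generalizing S n with
  | zero => simp only [W]; fun_prop
  | succ m ih =>
    have := ih (S + 1) (n + 1)
    have := ih S (n + 1)
    simp only [W]
    fun_prop

lemma W_pos_of_lt_div (hγ0 : 0 ≤ γ) (hγ1 : γ < 1) (m : ℕ) {S n lam : ℝ} (hS : 0 ≤ S)
    (hSn : S ≤ n) (hlam : lam < S / n) : 0 < W γ m S n lam := by
  cases m with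
  | zero => exact div_pos (lt_max_of_lt_left (by linarith)) (by linarith)
  | succ m =>
    have hp0 : 0 ≤ S / n := div_nonneg hS (hS.trans hSn)
    have hp1 : S / n ≤ 1 := div_le_one_of_le₀ hSn (hS.trans hSn)
    have hcont : 0 ≤ S / n * W γ m (S + 1) (n + 1) lam + (1 - S / n) * W γ m S (n + 1) lam :=
      add_nonneg (mul_nonneg hp0 (W_nonneg hγ1 ..)) (mul_nonneg (by linarith) (W_nonneg hγ1 ..))
    exact lt_max_of_lt_left (by nlinarith)

lemma W_eq_zero_of_one_le (m : ℕ) {S n lam : ℝ} (hS : 0 ≤ S) (hSn : S ≤ n) (hlam : 1 ≤ lam) :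
    W γ m S n lam = 0 := by
  induction m generalizing S n with
  | zero => simp [W, (div_le_one_of_le₀ hSn (hS.trans hSn)).trans hlam]
  | succ m ih =>
    rw [W, ih (by linarith) (by linarith), ih hS (by linarith)]
    simpa using (div_le_one_of_le₀ hSn (hS.trans hSn)).trans hlam

end

theorem bmab_gittins_index_properties_general (γ S n : ℝ) (N : ℕ)
    (hγ0 : 0 ≤ γ) (hγ1 : γ < 1) (hS : 0 ≤ S) (hSn : S ≤ n) :
    S / n ≤ sInf {lam : ℝ | W γ N S n lam = 0} ∧
    sInf {lam : ℝ | W γ N S n lam = 0} ≤ 1 ∧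
    W γ N S n (sInf {lam : ℝ | W γ N S n lam = 0}) = 0 ∧
    ∀ lam : ℝ, lam < sInf {lam : ℝ | W γ N S n lam = 0} →
      0 < W γ N S n lam := by
  set Z : Set ℝ := {lam : ℝ | W γ N S n lam = 0}
  have one_mem : (1 : ℝ) ∈ Z := W_eq_zero_of_one_le N hS hSn le_rfl
  have div_le_of_mem : ∀ lam ∈ Z, S / n ≤ lam := fun lam hlam =>
    le_of_not_gt fun hlt => (W_pos_of_lt_div hγ0 hγ1 N hS hSn hlt).ne' hlam
  have hbdd : BddBelow Z := ⟨S / n, div_le_of_mem⟩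
  have sInf_mem : sInf Z ∈ Z :=
    (isClosed_eq (continuous_W N S n) continuous_const).csInf_mem ⟨1, one_mem⟩ hbdd
  refine ⟨le_csInf ⟨1, one_mem⟩ div_le_of_mem, csInf_le hbdd one_mem, sInf_mem, ?_⟩
  intro lam hlam
  have not_mem : lam ∉ Z := fun hmem => (csInf_le hbdd hmem).not_gt hlam
  exact (W_nonneg hγ1 N S n lam).lt_of_ne (Ne.symm not_mem)

/-- For a fixed horizon `N` and state with `0 ≤ Σ ≤ n`, `n > 0`, the
finite-horizon Gittins index `ν = sInf {λ | W_N(Σ,n,γ,λ) = 0}` satisfies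
`Σ/n ≤ ν ≤ 1`, the infimum is attained, and `W_N(Σ,n,γ,λ) > 0` for every
`λ < ν`. -/
theorem bmab_gittins_index_properties (γ S n : ℝ) (N : ℕ)
    (hγ0 : 0 ≤ γ) (hγ1 : γ < 1) (hS : 0 ≤ S) (hSn : S ≤ n) (hn : 0 < n) :
    S / n ≤ sInf {lam : ℝ | W γ N S n lam = 0} ∧
    sInf {lam : ℝ | W γ N S n lam = 0} ≤ 1 ∧
    W γ N S n (sInf {lam : ℝ | W γ N S n lam = 0}) = 0 ∧
    ∀ lam : ℝ, lam < sInf {lam : ℝ | W γ N S n lam = 0} →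
      0 < W γ N S n lam :=
  bmab_gittins_index_properties_general γ S n N hγ0 hγ1 hS hSn
end
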